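/- arXiv:2301.05677 — 4 statements merged into one kernel-verified Lean document; each statement's English description precedes it below -/
import Mathlib

section
/- Let an auction order book be given with an auction price p_a, auction volume Q_a = min(S(p_a), D(p_a)), and a matching at (p_a, Q_a) with remaining volumes V_B^R, V_S^R. Then V_S^R(p_a) · V_B^R(p_a) = 0, i.e., V_S^R(p_a) = 0 or V_B^R(p_a) = 0. -/
/-!
Splitting the matched sell volume at the auction price gives
`Q_a = Σ_{p < p_a} V_S(p) + V_S^M(p_a)`, while `S(p_a) = Σ_{p < p_a} V_S(p) + V_S(p_a)`; hence
`Q_a + V_S^R(p_a) = S(p_a)`, and symmetrically `Q_a + V_B^R(p_a) = D(p_a)`. As `Q_a` is the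
smaller of `S(p_a)` and `D(p_a)`, one of the two remaining volumes vanishes.
-/

open Set

section MatchedVolume

variable {α : Type*} [LinearOrder α]

theorem finsum_mem_Iic_eq_add_finsum_mem_Iio {f : α → ℕ} (hf : (Function.support f).Finite)
    (a : α) : ∑ᶠ p ∈ Iic a, f p = f a + ∑ᶠ p ∈ Iio a, f p := by
  rw [← Iio_insert, finsum_mem_insert' f self_notMem_Iio (hf.inter_of_right _)]

theorem finsum_add_remaining_eq_finsum_mem_Iic {f g : α → ℕ} (hf : (Function.support f).Finite)
    (hle : ∀ p, g p ≤ f p) (a : α) (hbelow : ∀ p, p < a → g p = f p)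
    (habove : ∀ p, a < p → g p = 0) :
    (∑ᶠ p, g p) + (f a - g a) = ∑ᶠ p ∈ Iic a, f p := by
  have hg : (Function.support g).Finite :=
    hf.subset fun p hp => Nat.pos_iff_ne_zero.mp ((Nat.pos_of_ne_zero hp).trans_le (hle p))
  have htotal : ∑ᶠ p, g p = ∑ᶠ p ∈ Iic a, g p := by
    rw [← finsum_mem_univ, ← Iic_union_Ioi (a := a),
      finsum_mem_union' (Iic_disjoint_Ioi le_rfl) (hg.inter_of_right _) (hg.inter_of_right _),
      finsum_mem_of_eqOn_zero (s := Ioi a) fun p hp => habove p hp, add_zero]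
  have hIio : ∑ᶠ p ∈ Iio a, g p = ∑ᶠ p ∈ Iio a, f p := finsum_mem_congr rfl hbelow
  rw [htotal, finsum_mem_Iic_eq_add_finsum_mem_Iio hg, finsum_mem_Iic_eq_add_finsum_mem_Iio hf,
    hIio]
  have := hle a
  omega

end MatchedVolume

theorem remaining_volumes_product_zero_general
    (VB VS VBM VSM : ℝ → ℕ)
    (hVB : (Function.support VB).Finite)
    (hVS : (Function.support VS).Finite)
    (S D : ℝ → ℕ)
    (hS : ∀ p : ℝ, S p = ∑ᶠ p' ∈ {p' : ℝ | p' ≤ p}, VS p')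
    (hD : ∀ p : ℝ, D p = ∑ᶠ p' ∈ {p' : ℝ | p ≤ p'}, VB p')
    (pa : ℝ) (Qa : ℕ)
    (hQa : Qa = min (S pa) (D pa))
    (hBMle : ∀ p : ℝ, VBM p ≤ VB p)
    (hSMle : ∀ p : ℝ, VSM p ≤ VS p)
    (hBMabove : ∀ p : ℝ, pa < p → VBM p = VB p)
    (hBMbelow : ∀ p : ℝ, p < pa → VBM p = 0)
    (hSMbelow : ∀ p : ℝ, p < pa → VSM p = VS p)
    (hSMabove : ∀ p : ℝ, pa < p → VSM p = 0)
    (hBMsum : (∑ᶠ p : ℝ, VBM p) = Qa)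
    (hSMsum : (∑ᶠ p : ℝ, VSM p) = Qa) :
    (VS pa - VSM pa) * (VB pa - VBM pa) = 0 := by
  have hsell : Qa + (VS pa - VSM pa) = S pa := by
    rw [hS, ← hSMsum]
    exact finsum_add_remaining_eq_finsum_mem_Iic hVS hSMle pa hSMbelow hSMabove
  -- the buy side is the sell side for the reversed order on prices
  have hbuy : Qa + (VB pa - VBM pa) = D pa := by
    rw [hD, ← hBMsum]
    exact finsum_add_remaining_eq_finsum_mem_Iic (α := ℝᵒᵈ) hVB hBMle pa hBMabove hBMbelow
  rcases min_choice (S pa) (D pa) with h | h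
  · rw [Nat.sub_eq_zero_of_le (by omega : VS pa ≤ VSM pa), zero_mul]
  · rw [Nat.sub_eq_zero_of_le (by omega : VB pa ≤ VBM pa), mul_zero]

/-- For an auction order book with auction price `pa`, auction
volume `Qa = min (S pa) (D pa)`, and a matching at `(pa, Qa)`, the remaining
volumes at the auction price satisfy `V_S^R(pa) · V_B^R(pa) = 0`. -/
theorem remaining_volumes_product_zero
    (VB VS VBM VSM : ℝ → ℕ)
    (hVB : (Function.support VB).Finite)
    (hVS : (Function.support VS).Finite)
    (S D : ℝ → ℕ)
    (hS : ∀ p : ℝ, S p = ∑ᶠ p' ∈ {p' : ℝ | p' ≤ p}, VS p')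
    (hD : ∀ p : ℝ, D p = ∑ᶠ p' ∈ {p' : ℝ | p ≤ p'}, VB p')
    (pa : ℝ) (Qa : ℕ)
    (hmax : ∀ p : ℝ, min (S p) (D p) ≤ min (S pa) (D pa))
    (hQa : Qa = min (S pa) (D pa))
    (hBMle : ∀ p : ℝ, VBM p ≤ VB p)
    (hSMle : ∀ p : ℝ, VSM p ≤ VS p)
    (hBMabove : ∀ p : ℝ, pa < p → VBM p = VB p)
    (hBMbelow : ∀ p : ℝ, p < pa → VBM p = 0)
    (hSMbelow : ∀ p : ℝ, p < pa → VSM p = VS p)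
    (hSMabove : ∀ p : ℝ, pa < p → VSM p = 0)
    (hBMsum : (∑ᶠ p : ℝ, VBM p) = Qa)
    (hSMsum : (∑ᶠ p : ℝ, VSM p) = Qa) :
    (VS pa - VSM pa) * (VB pa - VBM pa) = 0 :=
  remaining_volumes_product_zero_general VB VS VBM VSM hVB hVS S D hS hD pa Qa hQa hBMle hSMle
    hBMabove hBMbelow hSMbelow hSMabove hBMsum hSMsum
end

section
/- Let an auction order book be given with an auction price p_a, auction volume Q_a = min(S(p_a), D(p_a)), and a matching at (p_a, Q_a). Set q_B^(0) = V_S^R(p_a) + V_B^M(p_a). Then for every natural number q with 0 ≤ q ≤ q_B^(0) and every price p, min(S(p), D(p) + q) ≤ min(S(p_a), D(p_a) + q); that is, after submitting a buy market order of size at most q_B^(0), the original auction price p_a still maximizes the exchanged volume (zero price impact). Moreover the maximal exchanged volume after the submission equals Q_a + min(V_S^R(p_a), V_B^R(p_a) + q). -/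
/-!
Split each side of the book at `pa`. On the sell side everything strictly below `pa` is matched
and nothing above is, so `S pa = Qa + V_S^R(pa)`, while for `p < pa` the supply `S p` together
with `V_S^M(pa)` is part of the matched volume, so `S p + V_S^M(pa) ≤ Qa`. The buy side is the
same statement for the reversed order on prices: `D pa = Qa + V_B^R(pa)` and
`D p + V_B^M(pa) ≤ Qa` for `p > pa`. With `q ≤ V_S^R(pa) + V_B^M(pa)` this leaves no price
`p ≠ pa` at which `min (S p) (D p + q)` can exceed its value at `pa`.
-/

open Set Function

section OneSidedMatching

variable {α : Type*} [LinearOrder α] {V VM : α → ℕ} {a : α}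

theorem finsum_matched_eq_add_finsum_Iio (hV : (support V).Finite)
    (hbelow : ∀ p, p < a → VM p = V p) (habove : ∀ p, a < p → VM p = 0) :
    ∑ᶠ p, VM p = VM a + ∑ᶠ p ∈ Iio a, V p := by
  have hsupp : ∑ᶠ p, VM p = ∑ᶠ p ∈ Iic a, VM p := by
    rw [← finsum_mem_univ]
    refine finsum_mem_inter_support_eq' _ _ _ fun p hp => ?_
    simpa using not_lt.1 fun h => hp (habove p h)
  have hVM : ∑ᶠ p ∈ Iio a, VM p = ∑ᶠ p ∈ Iio a, V p := finsum_mem_congr rfl hbelow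
  have hfin : (Iio a ∩ support VM).Finite :=
    hV.subset fun p ⟨hp, hVMp⟩ => by rwa [mem_support, ← hbelow p hp]
  rw [hsupp, ← Iio_insert, finsum_mem_insert' _ (show a ∉ Iio a from lt_irrefl a) hfin, hVM]

theorem finsum_Iic_eq_add_tsub (hV : (support V).Finite) (ha : VM a ≤ V a)
    (hbelow : ∀ p, p < a → VM p = V p) (habove : ∀ p, a < p → VM p = 0) :
    ∑ᶠ p ∈ Iic a, V p = ∑ᶠ p, VM p + (V a - VM a) := by
  rw [finsum_matched_eq_add_finsum_Iio hV hbelow habove, ← Iio_insert,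
    finsum_mem_insert' _ (show a ∉ Iio a from lt_irrefl a) (hV.inter_of_right _)]
  omega

theorem finsum_Iic_add_le_of_lt (hV : (support V).Finite)
    (hbelow : ∀ p, p < a → VM p = V p) (habove : ∀ p, a < p → VM p = 0) {p : α} (hp : p < a) :
    ∑ᶠ p' ∈ Iic p, V p' + VM a ≤ ∑ᶠ p, VM p := by
  rw [finsum_matched_eq_add_finsum_Iio hV hbelow habove, add_comm,
    ← finsum_mem_add_sdiff' (Iic_subset_Iio.2 hp) (hV.inter_of_right _)]
  omega

end OneSidedMatching

theorem buy_order_zero_impact_general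
    (VB VS VBM VSM : ℝ → ℕ)
    (hVB : (Function.support VB).Finite)
    (hVS : (Function.support VS).Finite)
    (S D : ℝ → ℕ)
    (hS : ∀ p : ℝ, S p = ∑ᶠ p' ∈ {p' : ℝ | p' ≤ p}, VS p')
    (hD : ∀ p : ℝ, D p = ∑ᶠ p' ∈ {p' : ℝ | p ≤ p'}, VB p')
    (pa : ℝ) (Qa : ℕ)
    (hBMle : ∀ p : ℝ, VBM p ≤ VB p)
    (hSMle : ∀ p : ℝ, VSM p ≤ VS p)
    (hBMabove : ∀ p : ℝ, pa < p → VBM p = VB p)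
    (hBMbelow : ∀ p : ℝ, p < pa → VBM p = 0)
    (hSMbelow : ∀ p : ℝ, p < pa → VSM p = VS p)
    (hSMabove : ∀ p : ℝ, pa < p → VSM p = 0)
    (hBMsum : (∑ᶠ p : ℝ, VBM p) = Qa)
    (hSMsum : (∑ᶠ p : ℝ, VSM p) = Qa) :
    ∀ q : ℕ, q ≤ (VS pa - VSM pa) + VBM pa →
      (∀ p : ℝ, min (S p) (D p + q) ≤ min (S pa) (D pa + q)) ∧
      min (S pa) (D pa + q) = Qa + min (VS pa - VSM pa) ((VB pa - VBM pa) + q) := by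
  intro q hq
  have hSpa : S pa = Qa + (VS pa - VSM pa) := by
    rw [hS, ← hSMsum]
    exact finsum_Iic_eq_add_tsub hVS (hSMle pa) hSMbelow hSMabove
  have hDpa : D pa = Qa + (VB pa - VBM pa) := by
    rw [hD, ← hBMsum]
    exact finsum_Iic_eq_add_tsub (α := ℝᵒᵈ) hVB (hBMle pa) hBMabove hBMbelow
  have hSbelow : ∀ p, p < pa → S p + VSM pa ≤ Qa := fun p hp => by
    rw [hS, ← hSMsum]
    exact finsum_Iic_add_le_of_lt hVS hSMbelow hSMabove hp
  have hDabove : ∀ p, pa < p → D p + VBM pa ≤ Qa := fun p hp => by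
    rw [hD, ← hBMsum]
    exact finsum_Iic_add_le_of_lt (α := ℝᵒᵈ) hVB hBMabove hBMbelow hp
  refine ⟨fun p => ?_, by omega⟩
  rcases lt_trichotomy p pa with hp | rfl | hp
  · have := hSbelow p hp
    omega
  · exact le_rfl
  · have := hDabove p hp
    omega

/-- Submitting a buy market order of size
`q ≤ q_B^(0) = V_S^R(pa) + V_B^M(pa)` just before the clearing (replacing the
demand `D` by `D + q`) has zero price impact: `pa` still maximizes the
exchanged volume, and the new maximal exchanged volume is
`Qa + min (V_S^R(pa)) (V_B^R(pa) + q)`. -/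
theorem buy_order_zero_impact
    (VB VS VBM VSM : ℝ → ℕ)
    (hVB : (Function.support VB).Finite)
    (hVS : (Function.support VS).Finite)
    (S D : ℝ → ℕ)
    (hS : ∀ p : ℝ, S p = ∑ᶠ p' ∈ {p' : ℝ | p' ≤ p}, VS p')
    (hD : ∀ p : ℝ, D p = ∑ᶠ p' ∈ {p' : ℝ | p ≤ p'}, VB p')
    (pa : ℝ) (Qa : ℕ)
    (hmax : ∀ p : ℝ, min (S p) (D p) ≤ min (S pa) (D pa))
    (hQa : Qa = min (S pa) (D pa))
    (hBMle : ∀ p : ℝ, VBM p ≤ VB p)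
    (hSMle : ∀ p : ℝ, VSM p ≤ VS p)
    (hBMabove : ∀ p : ℝ, pa < p → VBM p = VB p)
    (hBMbelow : ∀ p : ℝ, p < pa → VBM p = 0)
    (hSMbelow : ∀ p : ℝ, p < pa → VSM p = VS p)
    (hSMabove : ∀ p : ℝ, pa < p → VSM p = 0)
    (hBMsum : (∑ᶠ p : ℝ, VBM p) = Qa)
    (hSMsum : (∑ᶠ p : ℝ, VSM p) = Qa) :
    ∀ q : ℕ, q ≤ (VS pa - VSM pa) + VBM pa →
      (∀ p : ℝ, min (S p) (D p + q) ≤ min (S pa) (D pa + q)) ∧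
      min (S pa) (D pa + q) = Qa + min (VS pa - VSM pa) ((VB pa - VBM pa) + q) :=
  buy_order_zero_impact_general VB VS VBM VSM hVB hVS S D hS hD pa Qa hBMle hSMle hBMabove hBMbelow
    hSMbelow hSMabove hBMsum hSMsum
end

section
/- Let an auction order book be given with an auction price p_a, auction volume Q_a = min(S(p_a), D(p_a)), and a matching at (p_a, Q_a). Suppose there exists a price strictly greater than p_a carrying positive posted volume, and let p_B^(1) be the smallest such price. Set q_B^(0) = V_S^R(p_a) + V_B^M(p_a). Then after submitting a buy market order of size exactly q_B^(0), both p_a and p_B^(1) maximize p ↦ min(S(p), D(p) + q_B^(0)), and the common maximal value is Q_a + V_S^R(p_a). -/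
/-!
Let `C` be the supply strictly below `pa` and `E` the demand strictly above `pa`. The matching
conditions split both matched totals at `pa`: `Qa = C + V_S^M(pa) = V_B^M(pa) + E`. With
`q = V_S^R(pa) + V_B^M(pa)` this gives `S(pa) = Qa + V_S^R(pa) ≤ D(pa) + q`, and, since no buy
volume sits strictly between `pa` and `pB1`, `D(pB1) + q = E + q = Qa + V_S^R(pa) ≤ S(pB1)`.
No price does better: below `pa` the supply is at most `S(pa)`, above `pa` the demand is at
most `E`.
-/

open Set Function

theorem support_subset_support_of_le {α M : Type*} [AddCommMonoid M] [PartialOrder M]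
    [CanonicallyOrderedAdd M] {f g : α → M} (h : f ≤ g) : support f ⊆ support g :=
  fun x hfx hgx => hfx (le_zero_iff.mp (hgx ▸ h x))

theorem finsum_mem_le_finsum_mem_of_subset {α M : Type*} [AddCommMonoid M] [PartialOrder M]
    [CanonicallyOrderedAdd M] {f : α → M} {s t : Set α} (hf : f.support.Finite) (hst : s ⊆ t) :
    ∑ᶠ x ∈ s, f x ≤ ∑ᶠ x ∈ t, f x := by
  rw [← finsum_mem_add_sdiff' hst (hf.inter_of_right _)]
  exact le_self_add

section FinsumInterval

variable {α M : Type*} [LinearOrder α] [AddCommMonoid M] {f : α → M} {a b : α}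

theorem finsum_mem_Iic_eq_finsum_mem_Iio_add (hf : f.support.Finite) :
    ∑ᶠ x ∈ Iic a, f x = ∑ᶠ x ∈ Iio a, f x + f a := by
  rw [← Iio_insert, finsum_mem_insert' f self_notMem_Iio (hf.inter_of_right _), add_comm]

theorem finsum_mem_Ici_eq_add_finsum_mem_Ioi (hf : f.support.Finite) :
    ∑ᶠ x ∈ Ici a, f x = f a + ∑ᶠ x ∈ Ioi a, f x := by
  rw [← Ioi_insert, finsum_mem_insert' f self_notMem_Ioi (hf.inter_of_right _)]

theorem finsum_eq_finsum_mem_Iio_add_of_eq_zero (hf : f.support.Finite)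
    (h : ∀ x, a < x → f x = 0) : ∑ᶠ x, f x = ∑ᶠ x ∈ Iio a, f x + f a := by
  rw [← finsum_mem_Iic_eq_finsum_mem_Iio_add hf, ← finsum_mem_univ]
  refine finsum_mem_inter_support_eq f _ _ ?_
  ext x
  simp only [mem_inter_iff, mem_univ, true_and, mem_Iic, mem_support, iff_and_self]
  exact fun hx => not_lt.mp fun hax => hx (h x hax)

theorem finsum_eq_add_finsum_mem_Ioi_of_eq_zero (hf : f.support.Finite)
    (h : ∀ x, x < a → f x = 0) : ∑ᶠ x, f x = f a + ∑ᶠ x ∈ Ioi a, f x := by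
  rw [← finsum_mem_Ici_eq_add_finsum_mem_Ioi hf, ← finsum_mem_univ]
  refine finsum_mem_inter_support_eq f _ _ ?_
  ext x
  simp only [mem_inter_iff, mem_univ, true_and, mem_Ici, mem_support, iff_and_self]
  exact fun hx => not_lt.mp fun hax => hx (h x hax)

theorem finsum_mem_Ioi_eq_finsum_mem_Ici_of_eq_zero (hab : a < b)
    (h : ∀ x ∈ Ioo a b, f x = 0) : ∑ᶠ x ∈ Ioi a, f x = ∑ᶠ x ∈ Ici b, f x := by
  refine finsum_mem_inter_support_eq f _ _ ?_
  ext x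
  simp only [mem_inter_iff, mem_Ioi, mem_Ici, mem_support]
  refine ⟨fun ⟨hax, hx⟩ => ⟨not_lt.mp fun hxb => hx (h x ⟨hax, hxb⟩), hx⟩,
    fun ⟨hbx, hx⟩ => ⟨hab.trans_le hbx, hx⟩⟩

end FinsumInterval

theorem buy_order_boundary_two_maximizers_general
    (VB VS VBM VSM : ℝ → ℕ)
    (hVB : (Function.support VB).Finite)
    (hVS : (Function.support VS).Finite)
    (S D : ℝ → ℕ)
    (hS : ∀ p : ℝ, S p = ∑ᶠ p' ∈ {p' : ℝ | p' ≤ p}, VS p')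
    (hD : ∀ p : ℝ, D p = ∑ᶠ p' ∈ {p' : ℝ | p ≤ p'}, VB p')
    (pa : ℝ) (Qa : ℕ)
    (hBMle : ∀ p : ℝ, VBM p ≤ VB p)
    (hSMle : ∀ p : ℝ, VSM p ≤ VS p)
    (hBMabove : ∀ p : ℝ, pa < p → VBM p = VB p)
    (hBMbelow : ∀ p : ℝ, p < pa → VBM p = 0)
    (hSMbelow : ∀ p : ℝ, p < pa → VSM p = VS p)
    (hSMabove : ∀ p : ℝ, pa < p → VSM p = 0)
    (hBMsum : (∑ᶠ p : ℝ, VBM p) = Qa)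
    (hSMsum : (∑ᶠ p : ℝ, VSM p) = Qa)
    (pB1 : ℝ)
    (hpB1gt : pa < pB1)
    (hpB1min : ∀ p : ℝ, pa < p → 0 < VB p + VS p → pB1 ≤ p) :
    (∀ p : ℝ, min (S p) (D p + ((VS pa - VSM pa) + VBM pa)) ≤
        min (S pa) (D pa + ((VS pa - VSM pa) + VBM pa))) ∧
    (∀ p : ℝ, min (S p) (D p + ((VS pa - VSM pa) + VBM pa)) ≤
        min (S pB1) (D pB1 + ((VS pa - VSM pa) + VBM pa))) ∧
    min (S pa) (D pa + ((VS pa - VSM pa) + VBM pa)) = Qa + (VS pa - VSM pa) ∧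
    min (S pB1) (D pB1 + ((VS pa - VSM pa) + VBM pa)) = Qa + (VS pa - VSM pa) := by
  have hVSM : (support VSM).Finite := hVS.subset (support_subset_support_of_le hSMle)
  have hVBM : (support VBM).Finite := hVB.subset (support_subset_support_of_le hBMle)
  have hQa_supply : Qa = ∑ᶠ x ∈ Iio pa, VS x + VSM pa := by
    rw [← hSMsum, finsum_eq_finsum_mem_Iio_add_of_eq_zero hVSM hSMabove,
      finsum_mem_congr (s := Iio pa) rfl hSMbelow]
  have hQa_demand : Qa = VBM pa + ∑ᶠ x ∈ Ioi pa, VB x := by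
    rw [← hBMsum, finsum_eq_add_finsum_mem_Ioi_of_eq_zero hVBM hBMbelow,
      finsum_mem_congr (s := Ioi pa) rfl hBMabove]
  have hS_pa : S pa = ∑ᶠ x ∈ Iio pa, VS x + VS pa :=
    (hS pa).trans (finsum_mem_Iic_eq_finsum_mem_Iio_add hVS)
  have hD_pa : D pa = VB pa + ∑ᶠ x ∈ Ioi pa, VB x :=
    (hD pa).trans (finsum_mem_Ici_eq_add_finsum_mem_Ioi hVB)
  have hD_pB1 : D pB1 = ∑ᶠ x ∈ Ioi pa, VB x :=
    (hD pB1).trans (finsum_mem_Ioi_eq_finsum_mem_Ici_of_eq_zero hpB1gt fun x ⟨hax, hxb⟩ =>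
      by_contra fun hx => (hpB1min x hax (by omega)).not_gt hxb).symm
  have hS_mono : Monotone S := fun p q hpq => by
    rw [hS, hS]; exact finsum_mem_le_finsum_mem_of_subset hVS (Iic_subset_Iic.mpr hpq)
  have hD_le : ∀ p, pa < p → D p ≤ ∑ᶠ x ∈ Ioi pa, VB x := fun p hp => by
    rw [hD]; exact finsum_mem_le_finsum_mem_of_subset hVB (Ici_subset_Ioi.mpr hp)
  have hVSM_pa := hSMle pa
  have hS_pB1 := hS_mono hpB1gt.le
  refine ⟨fun p => ?_, fun p => ?_, by omega, by omega⟩ <;>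
    rcases le_or_gt p pa with hp | hp
  · have := hS_mono hp; omega
  · have := hD_le p hp; omega
  · have := hS_mono hp; omega
  · have := hD_le p hp; omega

/-- Let `pB1` be the smallest price strictly greater than the
auction price `pa` carrying positive posted volume.  After submitting a buy
market order of size exactly `q_B^(0) = V_S^R(pa) + V_B^M(pa)` (replacing the
demand `D` by `D + q_B^(0)`), both `pa` and `pB1` maximize the exchanged
volume `p ↦ min (S p) (D p + q_B^(0))`, and the common maximal value is
`Qa + V_S^R(pa)`. -/
theorem buy_order_boundary_two_maximizers
    (VB VS VBM VSM : ℝ → ℕ)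
    (hVB : (Function.support VB).Finite)
    (hVS : (Function.support VS).Finite)
    (S D : ℝ → ℕ)
    (hS : ∀ p : ℝ, S p = ∑ᶠ p' ∈ {p' : ℝ | p' ≤ p}, VS p')
    (hD : ∀ p : ℝ, D p = ∑ᶠ p' ∈ {p' : ℝ | p ≤ p'}, VB p')
    (pa : ℝ) (Qa : ℕ)
    (hmax : ∀ p : ℝ, min (S p) (D p) ≤ min (S pa) (D pa))
    (hQa : Qa = min (S pa) (D pa))
    (hBMle : ∀ p : ℝ, VBM p ≤ VB p)
    (hSMle : ∀ p : ℝ, VSM p ≤ VS p)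
    (hBMabove : ∀ p : ℝ, pa < p → VBM p = VB p)
    (hBMbelow : ∀ p : ℝ, p < pa → VBM p = 0)
    (hSMbelow : ∀ p : ℝ, p < pa → VSM p = VS p)
    (hSMabove : ∀ p : ℝ, pa < p → VSM p = 0)
    (hBMsum : (∑ᶠ p : ℝ, VBM p) = Qa)
    (hSMsum : (∑ᶠ p : ℝ, VSM p) = Qa)
    (pB1 : ℝ)
    (hpB1gt : pa < pB1)
    (hpB1pos : 0 < VB pB1 + VS pB1)
    (hpB1min : ∀ p : ℝ, pa < p → 0 < VB p + VS p → pB1 ≤ p) :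
    (∀ p : ℝ, min (S p) (D p + ((VS pa - VSM pa) + VBM pa)) ≤
        min (S pa) (D pa + ((VS pa - VSM pa) + VBM pa))) ∧
    (∀ p : ℝ, min (S p) (D p + ((VS pa - VSM pa) + VBM pa)) ≤
        min (S pB1) (D pB1 + ((VS pa - VSM pa) + VBM pa))) ∧
    min (S pa) (D pa + ((VS pa - VSM pa) + VBM pa)) = Qa + (VS pa - VSM pa) ∧
    min (S pB1) (D pB1 + ((VS pa - VSM pa) + VBM pa)) = Qa + (VS pa - VSM pa) :=
  buy_order_boundary_two_maximizers_general VB VS VBM VSM hVB hVS S D hS hD pa Qa hBMle hSMle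
    hBMabove hBMbelow hSMbelow hSMabove hBMsum hSMsum pB1 hpB1gt hpB1min
end

section
/- Let S, D : ℝ → ℝ be functions with S non-decreasing and D non-increasing, and let q₁ ≤ q₂ be real numbers. Suppose p₁ is the unique maximizer of p ↦ min(S(p), D(p) + q₁) and p₂ is the unique maximizer of p ↦ min(S(p), D(p) + q₂). Then p₁ ≤ p₂; that is, the auction price resulting from an added buy market order is a non-decreasing function of the order size. -/
/-! If the price fell from `p₁` to `p₂ < p₁` when the order grew from `q₁` to `q₂`, then at the
smaller order the volume at `p₂` loses to `p₁` although demand is higher at `p₂`, so supply binds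
there: `S p₂ < D p₁ + q₁`. At the larger order the volume at `p₁` loses to `p₂` although supply is
higher at `p₁`, so demand binds there: `D p₁ + q₂ < S p₂`. Together these force `q₂ < q₁`. -/

section LinearOrder

variable {α : Type*} [LinearOrder α] {a b c d : α}

theorem lt_of_min_lt_min_of_le_left (h : min a b < min c d) (hdb : d ≤ b) : a < d :=
  (min_lt_iff.1 (h.trans_le (min_le_right c d))).resolve_right hdb.not_gt

theorem lt_of_min_lt_min_of_le_right (h : min a b < min c d) (hca : c ≤ a) : b < c :=
  (min_lt_iff.1 (h.trans_le (min_le_left c d))).resolve_left hca.not_gt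

end LinearOrder

section Auction

variable {S D : ℝ → ℝ} {q p p' : ℝ}

theorem supply_lt_demand_add_of_volume_lt_of_le (hD : Antitone D) (hpp' : p ≤ p')
    (h : min (S p) (D p + q) < min (S p') (D p' + q)) : S p < D p' + q :=
  lt_of_min_lt_min_of_le_left h (add_le_add_left (hD hpp') q)

theorem demand_add_lt_supply_of_volume_lt_of_le (hS : Monotone S) (hp'p : p' ≤ p)
    (h : min (S p) (D p + q) < min (S p') (D p' + q)) : D p + q < S p' :=
  lt_of_min_lt_min_of_le_right h (hS hp'p)

end Auction

/-- If `S` is a non-decreasing supply curve, `D` a non-increasing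
demand curve, `q₁ ≤ q₂`, and `p₁` (resp. `p₂`) is the unique maximizer of the
exchanged volume `p ↦ min (S p) (D p + q₁)` (resp. with `q₂`), then `p₁ ≤ p₂`:
the auction price resulting from an added buy market order is a non-decreasing
function of the order size. -/
theorem auction_price_monotone_in_buy_order_size
    (S D : ℝ → ℝ) (hS : Monotone S) (hD : Antitone D)
    (q₁ q₂ : ℝ) (hq : q₁ ≤ q₂) (p₁ p₂ : ℝ)
    (h₁ : ∀ p : ℝ, p ≠ p₁ → min (S p) (D p + q₁) < min (S p₁) (D p₁ + q₁))
    (h₂ : ∀ p : ℝ, p ≠ p₂ → min (S p) (D p + q₂) < min (S p₂) (D p₂ + q₂)) :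
    p₁ ≤ p₂ := by
  by_contra! hlt
  have hsupply : S p₂ < D p₁ + q₁ :=
    supply_lt_demand_add_of_volume_lt_of_le hD hlt.le (h₁ p₂ hlt.ne)
  have hdemand : D p₁ + q₂ < S p₂ :=
    demand_add_lt_supply_of_volume_lt_of_le hS hlt.le (h₂ p₁ hlt.ne')
  linarith
end
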